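/- Let (g, t) be a construction in a construction space. Then there exists a decomposition D of (g, t) that is a decoupling of (g, t), i.e. a decomposition in which every vertex is labelled by a construction that is trivial or basic. -/

import Mathlib

namespace RST

/-! ## Type systems -/

/-- A relation (given as a set of pairs) is a partial order on the set `Ty`. -/
def IsPartialOrderOn {U : Type*} (Ty : Set U) (le : Set (U × U)) : Prop :=
  (∀ p ∈ le, p.1 ∈ Ty ∧ p.2 ∈ Ty) ∧
  (∀ τ ∈ Ty, (τ, τ) ∈ le) ∧
  (∀ a b : U, (a, b) ∈ le → (b, a) ∈ le → a = b) ∧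
  (∀ a b c : U, (a, b) ∈ le → (b, c) ∈ le → (a, c) ∈ le)

/-- The subtype closure of `Ty'` in the type system `(Ty, le)`. -/
def subtypeClosure {U : Type*} (Ty : Set U) (le : Set (U × U)) (Ty' : Set U) : Set U :=
  {τ | τ ∈ Ty ∧ ∃ τ' ∈ Ty', (τ, τ') ∈ le}

/-- The set of all subtype closures of subsets of `Ty`. -/
def SC {U : Type*} (Ty : Set U) (le : Set (U × U)) : Set (Set U) :=
  {S | ∃ Ty' ⊆ Ty, S = subtypeClosure Ty le Ty'}

/-- The candidate order of an upper bound extension: the reflexive closure (on `Ty ∪ Tystar`)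
of `le` together with the pairs `(τ, f S)` for `τ ∈ S ∈ SC Ty le`. -/
def upperBoundRel {U : Type*} (Ty Tystar : Set U) (le : Set (U × U)) (f : Set U → U) :
    Set (U × U) :=
  (le ∪ {p : U × U | ∃ S ∈ SC Ty le, p.1 ∈ S ∧ p.2 = f S}) ∪
    {p : U × U | p.1 = p.2 ∧ p.1 ∈ Ty ∪ Tystar}

/-! ## Graphs -/

/-- A (raw) directed labelled bipartite graph: tokens `Tk`, configurators `Cf`, arrows `Arr`,
incidence, arrow indices and vertex labels all given relationally (as sets of pairs), so that
unions of graphs are componentwise unions. -/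
structure PreGraph (V A L : Type*) where
  Tk : Set V
  Cf : Set V
  Arr : Set A
  inc : Set (A × (V × V))
  ia : Set (A × ℕ)
  tl : Set (V × L)
  cl : Set (V × L)

variable {V A L : Type*}

instance : Union (PreGraph V A L) :=
  ⟨fun g h =>
    ⟨g.Tk ∪ h.Tk, g.Cf ∪ h.Cf, g.Arr ∪ h.Arr, g.inc ∪ h.inc, g.ia ∪ h.ia,
      g.tl ∪ h.tl, g.cl ∪ h.cl⟩⟩

def PreGraph.Subgraph (h g : PreGraph V A L) : Prop :=
  h.Tk ⊆ g.Tk ∧ h.Cf ⊆ g.Cf ∧ h.Arr ⊆ g.Arr ∧ h.inc ⊆ g.inc ∧ h.ia ⊆ g.ia ∧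
    h.tl ⊆ g.tl ∧ h.cl ⊆ g.cl

/-- The vertices adjacent to `u` (together with `u`). -/
def PreGraph.adjTo (g : PreGraph V A L) (u : V) : Set V :=
  {u} ∪ {v | ∃ a ∈ g.Arr, (a, (v, u)) ∈ g.inc ∨ (a, (u, v)) ∈ g.inc}

/-- The arrows incident to `u`. -/
def PreGraph.incidentArrows (g : PreGraph V A L) (u : V) : Set A :=
  {a | a ∈ g.Arr ∧ ∃ v, (a, (v, u)) ∈ g.inc ∨ (a, (u, v)) ∈ g.inc}

/-- The restriction of a graph to given vertex and arrow sets. -/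
def PreGraph.restrict (g : PreGraph V A L) (Vs : Set V) (As : Set A) : PreGraph V A L :=
  ⟨g.Tk ∩ Vs, g.Cf ∩ Vs, g.Arr ∩ As, {q | q ∈ g.inc ∧ q.1 ∈ As},
    {q | q ∈ g.ia ∧ q.1 ∈ As}, {q | q ∈ g.tl ∧ q.1 ∈ Vs}, {q | q ∈ g.cl ∧ q.1 ∈ Vs}⟩

/-- The neighbourhood of a vertex `u`. -/
def PreGraph.Nh (g : PreGraph V A L) (u : V) : PreGraph V A L :=
  g.restrict (g.adjTo u) (g.incidentArrows u)

/-- A set of pairs is (the graph of) a function with domain `D`. -/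
def IsFunctionOn {α β : Type*} (R : Set (α × β)) (D : Set α) : Prop :=
  (∀ p ∈ R, p.1 ∈ D) ∧ ∀ x ∈ D, ∃! y, (x, y) ∈ R

/-- A raw graph is a genuine directed labelled bipartite graph. -/
def IsGraph (g : PreGraph V A L) : Prop :=
  Disjoint g.Tk g.Cf ∧
  IsFunctionOn g.inc g.Arr ∧
  (∀ a v w, (a, (v, w)) ∈ g.inc → (v ∈ g.Tk ∧ w ∈ g.Cf) ∨ (v ∈ g.Cf ∧ w ∈ g.Tk)) ∧
  IsFunctionOn g.ia g.Arr ∧ IsFunctionOn g.tl g.Tk ∧ IsFunctionOn g.cl g.Cf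

/-- `ars` is the list of incoming arrows of `u`, listed in increasing index order
(the arrow at position `i` carries index `i+1`). -/
def InArrowSeq (g : PreGraph V A L) (u : V) (ars : List A) : Prop :=
  ars.Nodup ∧ (∀ a : A, a ∈ ars ↔ a ∈ g.Arr ∧ ∃ w, (a, (w, u)) ∈ g.inc) ∧
  ∀ (i : ℕ) (a : A), ars[i]? = some a → (a, i + 1) ∈ g.ia

/-- `t` is an output token of the configurator `u`. -/
def OutputTok (g : PreGraph V A L) (u t : V) : Prop :=
  ∃ a ∈ g.Arr, (a, (u, t)) ∈ g.inc

/-- `ts` is the input token-sequence of the configurator `u`. -/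
def InputTokSeq (g : PreGraph V A L) (u : V) (ts : List V) : Prop :=
  ∃ ars : List A, InArrowSeq g u ars ∧
    List.Forall₂ (fun a v => (a, (v, u)) ∈ g.inc) ars ts

/-- `τs` is the input type-sequence of the configurator `u`. -/
def InputTypeSeq (g : PreGraph V A L) (u : V) (τs : List L) : Prop :=
  ∃ ts : List V, InputTokSeq g u ts ∧ List.Forall₂ (fun v τ => (v, τ) ∈ g.tl) ts τs

/-- `g` is a configuration of the constructor `c` (with signature `(ins, out)`),
whose single configurator is `u`. -/
def IsConfiguration (le : Set (L × L)) (g : PreGraph V A L) (u : V) (c : L)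
    (ins : List L) (out : L) : Prop :=
  IsGraph g ∧ g.Cf = {u} ∧ (u, c) ∈ g.cl ∧
  g.Tk = {v | ∃ a ∈ g.Arr, (a, (v, u)) ∈ g.inc ∨ (a, (u, v)) ∈ g.inc} ∧
  (∃! a0 : A, a0 ∈ g.Arr ∧ ∃ w, (a0, (u, w)) ∈ g.inc) ∧
  (∀ a0 ∈ g.Arr, ∀ w : V, (a0, (u, w)) ∈ g.inc →
      (a0, 0) ∈ g.ia ∧ ∃ σ, (w, σ) ∈ g.tl ∧ (σ, out) ∈ le) ∧
  (∃ ars : List A, InArrowSeq g u ars ∧ ars.length = ins.length ∧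
    ∀ (i : ℕ) (a : A) (τ : L), ars[i]? = some a → ins[i]? = some τ →
      ∃ w σ, (a, (w, u)) ∈ g.inc ∧ (w, σ) ∈ g.tl ∧ (σ, τ) ∈ le)

/-- A structure graph for the constructor specification `(C, sig)` over types `(Ty, le)`. -/
def IsStructureGraph (Ty : Set L) (le : Set (L × L)) (C : Set L)
    (sig : Set (L × (List L × L))) (g : PreGraph V A L) : Prop :=
  IsGraph g ∧ (∀ x τ, (x, τ) ∈ g.tl → τ ∈ Ty) ∧
  ∀ u ∈ g.Cf, ∃ c ins out, (u, c) ∈ g.cl ∧ c ∈ C ∧ (c, (ins, out)) ∈ sig ∧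
    IsConfiguration le (g.Nh u) u c ins out

/-! ## Construction spaces -/

/-- The raw data of a construction space: a type system, a constructor specification and
a structure graph. -/
structure CSpace (V A L : Type*) where
  Ty : Set L
  le : Set (L × L)
  C : Set L
  sig : Set (L × (List L × L))
  G : PreGraph V A L

instance : Union (CSpace V A L) :=
  ⟨fun c d => ⟨c.Ty ∪ d.Ty, c.le ∪ d.le, c.C ∪ d.C, c.sig ∪ d.sig, c.G ∪ d.G⟩⟩

/-- The raw data forms a genuine construction space. -/
def IsCSpace (Cs : CSpace V A L) : Prop :=
  IsPartialOrderOn Cs.Ty Cs.le ∧ Disjoint Cs.C Cs.Ty ∧ IsFunctionOn Cs.sig Cs.C ∧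
  (∀ c ins out, (c, (ins, out)) ∈ Cs.sig →
      ins ≠ [] ∧ (∀ τ ∈ ins, τ ∈ Cs.Ty) ∧ out ∈ Cs.Ty) ∧
  IsStructureGraph Cs.Ty Cs.le Cs.C Cs.sig Cs.G

/-- Token-functionality of the constructors of a structure graph. -/
def TokenFunctional (g : PreGraph V A L) : Prop :=
  ∀ u u' c, u ∈ g.Cf → u' ∈ g.Cf → (u, c) ∈ g.cl → (u', c) ∈ g.cl →
    ∀ ts, InputTokSeq g u ts → InputTokSeq g u' ts →
      ∀ t t', OutputTok g u t → OutputTok g u' t' → t = t'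

/-- Type-functionality of the constructors of a structure graph. -/
def TypeFunctional (g : PreGraph V A L) : Prop :=
  ∀ u u' c, u ∈ g.Cf → u' ∈ g.Cf → (u, c) ∈ g.cl → (u', c) ∈ g.cl →
    ∀ τs, InputTypeSeq g u τs → InputTypeSeq g u' τs →
      ∀ t t' τ τ', OutputTok g u t → OutputTok g u' t' →
        (t, τ) ∈ g.tl → (t', τ') ∈ g.tl → τ = τ'

def IsFunctionalGraph (g : PreGraph V A L) : Prop :=
  TokenFunctional g ∧ TypeFunctional g

/-! ## Representational systems -/

/-- The raw data of a representational system: grammatical, entailment and identification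
spaces. -/
structure RSystem (V A L : Type*) where
  Gs : CSpace V A L
  Es : CSpace V A L
  Is : CSpace V A L

instance : Union (RSystem V A L) :=
  ⟨fun r s => ⟨r.Gs ∪ s.Gs, r.Es ∪ s.Es, r.Is ∪ s.Is⟩⟩

/-- The universal space of a representational system. -/
def RSystem.uspace (R : RSystem V A L) : CSpace V A L := (R.Gs ∪ R.Es) ∪ R.Is

/-- `R` is a representational system formed over the type system `(Ty, le)` and the
meta-type system `(MTy, Mle)`. -/
def IsRSystem (R : RSystem V A L) (Ty : Set L) (le : Set (L × L))
    (MTy : Set L) (Mle : Set (L × L)) : Prop :=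
  IsPartialOrderOn Ty le ∧ IsPartialOrderOn MTy Mle ∧
  IsPartialOrderOn (Ty ∪ MTy) (le ∪ Mle) ∧
  R.Gs.Ty = Ty ∧ R.Gs.le = le ∧ IsCSpace R.Gs ∧ IsFunctionalGraph R.Gs.G ∧
  R.Es.Ty = Ty ∧ R.Es.le = le ∧ IsCSpace R.Es ∧ R.Es.G.Tk ⊆ R.Gs.G.Tk ∧
  R.Is.Ty = Ty ∪ MTy ∧ R.Is.le = le ∪ Mle ∧ IsCSpace R.Is ∧
  (∀ x ∈ R.Is.G.Tk, x ∉ R.Gs.G.Tk → ∃ τ ∈ MTy, (x, τ) ∈ R.Is.G.tl) ∧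
  (∀ x ∈ R.Is.G.Tk, (∃ u ∈ R.Is.G.Cf, OutputTok R.Is.G u x) → x ∉ R.Gs.G.Tk) ∧
  IsCSpace (R.Gs ∪ R.Es) ∧ IsCSpace (R.Gs ∪ R.Is) ∧ IsCSpace (R.Es ∪ R.Is) ∧
  Disjoint R.Gs.C R.Es.C ∧ Disjoint R.Gs.C R.Is.C ∧ Disjoint R.Es.C R.Is.C

/-- `(R, R', Is'')` is an inter-representational-system encoding, where `R` is formed over
`(Ty, le)` and `(MTy, Mle)`, `R'` over `(Ty', le')` and `(MTy', Mle')`, and `Is''` is an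
identification space formed over `(Ty ∪ Ty', le ∪ le')` and `(MTy'', Mle'')`. -/
def IsIRSE (R R' : RSystem V A L) (Is'' : CSpace V A L)
    (Ty : Set L) (le : Set (L × L)) (MTy : Set L) (Mle : Set (L × L))
    (Ty' : Set L) (le' : Set (L × L)) (MTy' : Set L) (Mle' : Set (L × L))
    (MTy'' : Set L) (Mle'' : Set (L × L)) : Prop :=
  IsRSystem R Ty le MTy Mle ∧ IsRSystem R' Ty' le' MTy' Mle' ∧
  IsRSystem (R ∪ R') (Ty ∪ Ty') (le ∪ le') (MTy ∪ MTy') (Mle ∪ Mle') ∧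
  IsPartialOrderOn MTy'' Mle'' ∧
  IsPartialOrderOn ((Ty ∪ Ty') ∪ MTy'') ((le ∪ le') ∪ Mle'') ∧
  Is''.Ty = (Ty ∪ Ty') ∪ MTy'' ∧ Is''.le = (le ∪ le') ∪ Mle'' ∧ IsCSpace Is'' ∧
  MTy ∪ MTy' ⊆ MTy'' ∧ Mle ∪ Mle' ⊆ Mle'' ∧
  (∀ x ∈ Is''.G.Tk, x ∉ (R.Gs ∪ R'.Gs).G.Tk → ∃ τ ∈ MTy'', (x, τ) ∈ Is''.G.tl) ∧
  (∀ x ∈ Is''.G.Tk, (∃ u ∈ Is''.G.Cf, OutputTok Is''.G u x) →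
      x ∉ (R.Gs ∪ R'.Gs).G.Tk) ∧
  IsCSpace ((R.Gs ∪ R'.Gs) ∪ Is'') ∧ IsCSpace ((R.Es ∪ R'.Es) ∪ Is'') ∧
  IsCSpace ((R.Is ∪ R'.Is) ∪ Is'') ∧
  Disjoint Is''.C (R.Gs ∪ R'.Gs).C ∧ Disjoint Is''.C (R.Es ∪ R'.Es).C ∧
  Disjoint Is''.C (R.Is ∪ R'.Is).C

/-! ## Trails -/

/-- A trail candidate: a list of arrows together with an associated source and target vertex
(needed for the empty trail `[]_v`). -/
structure Trail (V A : Type*) where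
  arrows : List A
  src : V
  tgt : V

/-- The empty trail `[]_v`. -/
def Trail.nil {V A : Type*} (v : V) : Trail V A := ⟨[], v, v⟩

/-- Concatenation `e ⊕ w` of trails. -/
def Trail.append {V A : Type*} (e w : Trail V A) : Trail V A :=
  ⟨e.arrows ++ w.arrows, e.src, w.tgt⟩

/-- The image of a trail under vertex/arrow maps. -/
def Trail.map {V A : Type*} (fv : V → V) (fa : A → A) (tr : Trail V A) : Trail V A :=
  ⟨tr.arrows.map fa, fv tr.src, fv tr.tgt⟩

/-- The arrows chain through the graph from `s` to `t`. -/
def ChainIn (g : PreGraph V A L) : List A → V → V → Prop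
  | [], s, t => s = t
  | a :: rest, s, t => a ∈ g.Arr ∧ ∃ m, (a, (s, m)) ∈ g.inc ∧ ChainIn g rest m t

/-- `tr` is a trail in `g`. -/
def IsTrailIn (g : PreGraph V A L) (tr : Trail V A) : Prop :=
  tr.arrows.Nodup ∧ ChainIn g tr.arrows tr.src tr.tgt ∧
  tr.src ∈ g.Tk ∪ g.Cf ∧ tr.tgt ∈ g.Tk ∪ g.Cf

/-- A trail is well-formed provided its source and target are tokens. -/
def WellFormed (g : PreGraph V A L) (tr : Trail V A) : Prop :=
  tr.src ∈ g.Tk ∧ tr.tgt ∈ g.Tk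

/-- `tr` is (source-)extendable by the arrow `a`. -/
def ExtendableBy (g : PreGraph V A L) (tr : Trail V A) (a : A) : Prop :=
  a ∈ g.Arr ∧ a ∉ tr.arrows ∧ ∃ s, (a, (s, tr.src)) ∈ g.inc

def Extendable (g : PreGraph V A L) (tr : Trail V A) : Prop :=
  ∃ a, ExtendableBy g tr a

def NonExtendable (g : PreGraph V A L) (tr : Trail V A) : Prop :=
  ¬ Extendable g tr

/-- `TES g tr S` holds iff `S` is the trail extension sequence of the trail `tr` in `g`,
following the recursive definition of TES. -/
inductive TES (g : PreGraph V A L) : Trail V A → List (Trail V A) → Prop where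
  | nonext (tr : Trail V A) (h : NonExtendable g tr) :
      TES g tr [⟨[], tr.src, tr.src⟩]
  | ext (tr : Trail V A) (a : A) (u : V) (ars : List A)
      (Ss : List (List (Trail V A)))
      (hext : ExtendableBy g tr a)
      (hinc : (a, (u, tr.src)) ∈ g.inc)
      (hars : InArrowSeq g u ars)
      (hlen : Ss.length = ars.length)
      (hrec : ∀ (i : ℕ) (ai : A) (si : V) (Si : List (Trail V A)),
          ars[i]? = some ai → Ss[i]? = some Si → (ai, (si, u)) ∈ g.inc →
          TES g ⟨ai :: a :: tr.arrows, si, tr.tgt⟩ Si) :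
      TES g tr (List.flatten (List.zipWith
        (fun (ai : A) (Si : List (Trail V A)) =>
          Si.map (fun e => (⟨e.arrows ++ [ai, a], e.src, tr.src⟩ : Trail V A)))
        ars Ss))

/-- The sequence of sources of a sequence of trails. -/
def srcSeq {V A : Type*} (S : List (Trail V A)) : List V := S.map Trail.src

/-- The right product `S ◁ w`, appending the trail `w` to each trail in `S`. -/
def rprod {V A : Type*} (S : List (Trail V A)) (w : Trail V A) : List (Trail V A) :=
  S.map fun e => e.append w

/-! ## Constructions -/

/-- Every token is the target of at most one arrow. -/
def UniStructured (g : PreGraph V A L) : Prop :=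
  ∀ x ∈ g.Tk, ∀ a ∈ g.Arr, ∀ b ∈ g.Arr,
    (∃ w, (a, (w, x)) ∈ g.inc) → (∃ w, (b, (w, x)) ∈ g.inc) → a = b

/-- `(g, t)` is a construction in the construction space `Cs`: `g` is a finite uni-structured
structure graph (a subgraph of the structure graph of `Cs`), `t` is a token of `g`, and every
vertex of `g` is the source of a trail targeting `t`. -/
def IsConstruction (Cs : CSpace V A L) (g : PreGraph V A L) (t : V) : Prop :=
  g.Subgraph Cs.G ∧ IsStructureGraph Cs.Ty Cs.le Cs.C Cs.sig g ∧
  g.Tk.Finite ∧ g.Cf.Finite ∧ g.Arr.Finite ∧ UniStructured g ∧ t ∈ g.Tk ∧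
  ∀ v ∈ g.Tk ∪ g.Cf, ∃ tr : Trail V A, IsTrailIn g tr ∧ tr.src = v ∧ tr.tgt = t

/-- `(g, t)` is a construction *in* `Cs` in the strong sense: moreover every configurator of `g`
has its full neighbourhood from the structure graph of `Cs`. -/
def IsConstructionIn (Cs : CSpace V A L) (g : PreGraph V A L) (t : V) : Prop :=
  IsConstruction Cs g t ∧ ∀ u ∈ g.Cf, g.Nh u = Cs.G.Nh u

/-- A trivial construction: the construct is its only vertex. -/
def TrivialC (g : PreGraph V A L) (t : V) : Prop := g.Tk ∪ g.Cf = {t}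

/-- A basic construction: exactly one configurator. -/
def BasicC (g : PreGraph V A L) : Prop := ∃ u, g.Cf = {u}

/-- The set of arrows occurring in a sequence of trails. -/
def trailArrowSet {V A : Type*} (TR : List (Trail V A)) : Set A :=
  {a | ∃ tr ∈ TR, a ∈ tr.arrows}

/-- The vertices of the `TR`-graph: vertices incident to arrows of trails of `TR`,
together with the associated vertex of any empty trail of `TR`. -/
def trailVertexSet (g : PreGraph V A L) (TR : List (Trail V A)) : Set V :=
  {v | (∃ a ∈ trailArrowSet TR, ∃ w, (a, (v, w)) ∈ g.inc ∨ (a, (w, v)) ∈ g.inc) ∨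
    ∃ tr ∈ TR, tr.arrows = [] ∧ tr.src = v}

/-- The `TR`-graph `v(TR)`. -/
def trGraph (g : PreGraph V A L) (TR : List (Trail V A)) : PreGraph V A L :=
  g.restrict (trailVertexSet g TR) (trailArrowSet TR)

/-- `((g', t), ics)` is a split of the construction `(g, t)`: `(g', t)` is a generator and
`ics` is the corresponding induced construction sequence (each induced construction is
`(v(TES(tri)), source(tri))`, the TES being computed in `(g, t)`). -/
def IsSplit (Cs : CSpace V A L) (g : PreGraph V A L) (t : V)
    (g' : PreGraph V A L) (ics : List (PreGraph V A L × V)) : Prop :=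
  IsConstruction Cs g' t ∧ g'.Subgraph g ∧
  ∃ trs : List (Trail V A), TES g' (Trail.nil t) trs ∧ ics.length = trs.length ∧
    ∀ (i : ℕ) (tri : Trail V A), trs[i]? = some tri →
      ∃ Si : List (Trail V A), TES g tri Si ∧ ics[i]? = some (trGraph g Si, tri.src)

/-! ## Decompositions -/

/-- A decomposition tree: vertices labelled by a graph and a token, with the incoming arrows
of every vertex given in index order by a list of subtrees. -/
inductive DTree (V A L : Type*) where
  | node : PreGraph V A L → V → List (DTree V A L) → DTree V A L

def DTree.rootGraph : DTree V A L → PreGraph V A L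
  | .node g _ _ => g

def DTree.rootTok : DTree V A L → V
  | .node _ t _ => t

def DTree.kids : DTree V A L → List (DTree V A L)
  | .node _ _ cs => cs

/-- `IsDecompositionOf Cs D g t` holds iff `D` is a decomposition of the construction
`(g, t)` in `Cs`. -/
inductive IsDecompositionOf (Cs : CSpace V A L) : DTree V A L → PreGraph V A L → V → Prop where
  | single (g : PreGraph V A L) (t : V) (h : IsConstruction Cs g t) :
      IsDecompositionOf Cs (.node g t []) g t
  | split (g : PreGraph V A L) (t : V) (g' : PreGraph V A L)
      (ics : List (PreGraph V A L × V)) (cs : List (DTree V A L))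
      (hc : IsConstruction Cs g t)
      (hsplit : IsSplit Cs g t g' ics)
      (hlen : cs.length = ics.length)
      (hrec : ∀ (i : ℕ) (ci : DTree V A L) (gi : PreGraph V A L) (ti : V),
          cs[i]? = some ci → ics[i]? = some (gi, ti) → IsDecompositionOf Cs ci gi ti) :
      IsDecompositionOf Cs (.node g' t cs) g t

/-- `LcsRel D ls` holds iff `ls` is the leaf construction-sequence of `D`. -/
inductive LcsRel : DTree V A L → List (PreGraph V A L × V) → Prop where
  | leaf (g : PreGraph V A L) (t : V) : LcsRel (.node g t []) [(g, t)]
  | node (g : PreGraph V A L) (t : V) (cs : List (DTree V A L))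
      (ls : List (List (PreGraph V A L × V)))
      (hne : cs ≠ []) (hlen : ls.length = cs.length)
      (h : ∀ (i : ℕ) (ci : DTree V A L) (li : List (PreGraph V A L × V)),
          cs[i]? = some ci → ls[i]? = some li → LcsRel ci li) :
      LcsRel (.node g t cs) ls.flatten

/-- `(p, w)` is one of the constructions labelling a vertex of the decomposition tree. -/
inductive LabelOf : DTree V A L → PreGraph V A L → V → Prop where
  | root (g : PreGraph V A L) (t : V) (cs : List (DTree V A L)) :
      LabelOf (.node g t cs) g t
  | child (g : PreGraph V A L) (t : V) (cs : List (DTree V A L))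
      (c : DTree V A L) (p : PreGraph V A L) (w : V) :
      c ∈ cs → LabelOf c p w → LabelOf (.node g t cs) p w

/-- The union of all the graphs labelling vertices of the decomposition tree
(the graph of the construction `ct(D)` of the decomposition `D`). -/
def DTree.ctGraph (D : DTree V A L) : PreGraph V A L :=
  ⟨{x | ∃ p w, LabelOf D p w ∧ x ∈ p.Tk},
   {x | ∃ p w, LabelOf D p w ∧ x ∈ p.Cf},
   {a | ∃ p w, LabelOf D p w ∧ a ∈ p.Arr},
   {q | ∃ p w, LabelOf D p w ∧ q ∈ p.inc},
   {q | ∃ p w, LabelOf D p w ∧ q ∈ p.ia},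
   {q | ∃ p w, LabelOf D p w ∧ q ∈ p.tl},
   {q | ∃ p w, LabelOf D p w ∧ q ∈ p.cl}⟩

/-- Every vertex label of the decomposition tree satisfies `P`. -/
inductive AllLabels (P : PreGraph V A L → V → Prop) : DTree V A L → Prop where
  | node (g : PreGraph V A L) (t : V) (cs : List (DTree V A L)) :
      P g t → (∀ c, c ∈ cs → AllLabels P c) → AllLabels P (.node g t cs)

/-- The subtree of a decomposition tree at a given position (a path of child indices). -/
def subtreeAt : List ℕ → DTree V A L → Option (DTree V A L)
  | [], D => some D
  | i :: rest, .node _ _ cs =>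
    match cs[i]? with
    | some c => subtreeAt rest c
    | none => none

/-! ## Patterns and embeddings -/

/-- An embedding of the graph `g` into the graph `p`: an isomorphism preserving arrow indices
and configurator labels, with token labels respecting the subtype relation `le`. -/
def IsEmbedding (le : Set (L × L)) (g p : PreGraph V A L) (fv : V → V) (fa : A → A) : Prop :=
  (∀ x ∈ g.Tk, fv x ∈ p.Tk) ∧ (∀ x ∈ g.Cf, fv x ∈ p.Cf) ∧
  (∀ x ∈ g.Tk ∪ g.Cf, ∀ y ∈ g.Tk ∪ g.Cf, fv x = fv y → x = y) ∧
  (∀ y ∈ p.Tk, ∃ x ∈ g.Tk, fv x = y) ∧ (∀ y ∈ p.Cf, ∃ x ∈ g.Cf, fv x = y) ∧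
  (∀ a ∈ g.Arr, fa a ∈ p.Arr) ∧
  (∀ a ∈ g.Arr, ∀ b ∈ g.Arr, fa a = fa b → a = b) ∧
  (∀ b ∈ p.Arr, ∃ a ∈ g.Arr, fa a = b) ∧
  (∀ a v w, (a, (v, w)) ∈ g.inc → (fa a, (fv v, fv w)) ∈ p.inc) ∧
  (∀ a n, (a, n) ∈ g.ia → (fa a, n) ∈ p.ia) ∧
  (∀ u c, (u, c) ∈ g.cl → (fv u, c) ∈ p.cl) ∧
  (∀ x τ, (x, τ) ∈ g.tl → ∃ σ, (fv x, σ) ∈ p.tl ∧ (τ, σ) ∈ le)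

/-- The construction `(g, t)` matches the pattern `(p, v)`. -/
def MatchesPattern (le : Set (L × L)) (g : PreGraph V A L) (t : V)
    (p : PreGraph V A L) (v : V) : Prop :=
  ∃ fv fa, IsEmbedding le g p fv fa ∧ fv t = v

/-- `Ps` is a pattern space for `Cs`: a construction space over the same type system and
constructor specification such that every construction of `Cs` matches some construction
of `Ps`. -/
def IsPatternSpace (Cs Ps : CSpace V A L) : Prop :=
  Ps.Ty = Cs.Ty ∧ Ps.le = Cs.le ∧ Ps.C = Cs.C ∧ Ps.sig = Cs.sig ∧ IsCSpace Ps ∧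
  ∀ g t, IsConstruction Cs g t →
    ∃ p v, IsConstruction Ps p v ∧ MatchesPattern Cs.le g t p v

/-- Vertex-wise matching of two same-shape decomposition trees under a common pair of maps. -/
inductive DMatches (le : Set (L × L)) (fv : V → V) (fa : A → A) :
    DTree V A L → DTree V A L → Prop where
  | node (g : PreGraph V A L) (t : V) (p : PreGraph V A L) (v : V)
      (cs ds : List (DTree V A L))
      (hemb : IsEmbedding le g p fv fa) (ht : fv t = v)
      (hlen : cs.length = ds.length)
      (hrec : ∀ (i : ℕ) (ci di : DTree V A L), cs[i]? = some ci → ds[i]? = some di →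
          DMatches le fv fa ci di) :
      DMatches le fv fa (.node g t cs) (.node p v ds)

/-- The decomposition `D` matches the (pattern) decomposition `Δ`: there is an arrow-index
preserving isomorphism of trees together with an embedding of `ct(D)` into `ct(Δ)` whose
restriction to each vertex label is an embedding into the corresponding pattern label. -/
def DecompositionMatches (le : Set (L × L)) (D Δ : DTree V A L) : Prop :=
  ∃ fv fa, IsEmbedding le D.ctGraph Δ.ctGraph fv fa ∧ fv D.rootTok = Δ.rootTok ∧
    DMatches le fv fa D Δ

/-! ## Descriptions -/

/-- A description: a set of decompositions of patterns (constructions in the pattern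
space `Ps`). -/
def IsDescriptionOf (Ps : CSpace V A L) (Ds : Set (DTree V A L)) : Prop :=
  ∀ Δ ∈ Ds, ∃ p v, IsConstruction Ps p v ∧ IsDecompositionOf Ps Δ p v

/-- The description `Ds` is complete for `Cs`. -/
def CompleteDescription (Cs : CSpace V A L) (Ds : Set (DTree V A L)) : Prop :=
  ∀ g t, IsConstruction Cs g t →
    ∃ Δ ∈ Ds, ∃ D, IsDecompositionOf Cs D g t ∧ DecompositionMatches Cs.le D Δ

/-- The set of patterns labelling vertices of decompositions in `Ds`. -/
def PatternsOf (Ds : Set (DTree V A L)) : Set (PreGraph V A L × V) :=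
  {pv | ∃ Δ ∈ Ds, LabelOf Δ pv.1 pv.2}

/-- Label-preserving isomorphism of patterns/constructions. -/
def LabelIsomorphic (g : PreGraph V A L) (t : V) (p : PreGraph V A L) (v : V) : Prop :=
  ∃ fv fa, IsEmbedding {q : L × L | q.1 = q.2} g p fv fa ∧ fv t = v

/-- The description `Ds` is compact: finitely many patterns up to label-preserving
isomorphism. -/
def CompactDescription (Ds : Set (DTree V A L)) : Prop :=
  ∃ Reps : Set (PreGraph V A L × V), Reps.Finite ∧
    ∀ pv ∈ PatternsOf Ds, ∃ qw ∈ Reps, LabelIsomorphic pv.1 pv.2 qw.1 qw.2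

/-! ## Transformation constraints and structural transformations -/

/-- A transformation-constraint-shaped triple: two patterns (or constructions) together with
a set of patterns (or constructions). -/
structure TConstraint (V A L : Type*) where
  pa : PreGraph V A L
  ca : V
  pb : PreGraph V A L
  cb : V
  Pc : Set (PreGraph V A L × V)

/-- The union of the graphs of a set of patterns. -/
def pGraph (P : Set (PreGraph V A L × V)) : PreGraph V A L :=
  ⟨{x | ∃ pv ∈ P, x ∈ pv.1.Tk}, {x | ∃ pv ∈ P, x ∈ pv.1.Cf},
   {a | ∃ pv ∈ P, a ∈ pv.1.Arr}, {q | ∃ pv ∈ P, q ∈ pv.1.inc},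
   {q | ∃ pv ∈ P, q ∈ pv.1.ia}, {q | ∃ pv ∈ P, q ∈ pv.1.tl},
   {q | ∃ pv ∈ P, q ∈ pv.1.cl}⟩

/-- A respectful embedding of the set of patterns `P` into the set of patterns `P'`. -/
def RespectfulEmbedding (le : Set (L × L)) (P P' : Set (PreGraph V A L × V))
    (fv : V → V) (fa : A → A) : Prop :=
  IsEmbedding le (pGraph P) (pGraph P') fv fa ∧
  ∀ pv ∈ P, ∃ qw ∈ P', IsEmbedding le pv.1 qw.1 fv fa ∧ fv pv.2 = qw.2

/-- Satisfaction of one transformation-constraint-shaped triple by another: embeddings of the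
first two components, a respectful embedding of the third, whose common underlying maps give
an isomorphism of the unions of the graphs. -/
def TCSatisfies (le : Set (L × L)) (s s' : TConstraint V A L) : Prop :=
  ∃ fv fa,
    IsEmbedding le s.pa s'.pa fv fa ∧ fv s.ca = s'.ca ∧
    IsEmbedding le s.pb s'.pb fv fa ∧ fv s.cb = s'.cb ∧
    RespectfulEmbedding le s.Pc s'.Pc fv fa ∧
    IsEmbedding le ((s.pa ∪ s.pb) ∪ pGraph s.Pc) ((s'.pa ∪ s'.pb) ∪ pGraph s'.Pc) fv fa

/-- A transformation constraint for an encoding described by `(Ds, Ds', P'')`. -/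
def IsTransformationConstraint (Ds Ds' : Set (DTree V A L))
    (P'' : Set (PreGraph V A L × V)) (s : TConstraint V A L) : Prop :=
  (s.pa, s.ca) ∈ PatternsOf Ds ∧ (s.pb, s.cb) ∈ PatternsOf Ds' ∧ s.Pc ⊆ P''

/-- A constraint assignment for `Δ` and `Δ'`: a partial function (modelled with `Option`) on
pairs of vertices (paths) whose values are transformation constraints from `S0` matched by the
corresponding labels. -/
def IsConstraintAssignment (leR leR' : Set (L × L)) (S0 : Set (TConstraint V A L))
    (Δ Δ' : DTree V A L) (Lm : List ℕ → List ℕ → Option (TConstraint V A L)) : Prop :=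
  ∀ pi pi' s, Lm pi pi' = some s → s ∈ S0 ∧
    (∃ δ, subtreeAt pi Δ = some δ ∧
        MatchesPattern leR δ.rootGraph δ.rootTok s.pa s.ca) ∧
    (∃ δ', subtreeAt pi' Δ' = some δ' ∧
        MatchesPattern leR' δ'.rootGraph δ'.rootTok s.pb s.cb)

/-- The constraint assignment `Lm` is satisfied by the pair of decompositions `(D, D')`
(whose vertices correspond, via the shape-preserving matchings, to those of `Δ`, `Δ'`). -/
def LSatisfiedBy (leI : Set (L × L)) (Ip : CSpace V A L)
    (Lm : List ℕ → List ℕ → Option (TConstraint V A L)) (D D' : DTree V A L) : Prop :=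
  ∀ pi pi' s d d', Lm pi pi' = some s →
    subtreeAt pi D = some d → subtreeAt pi' D' = some d' →
    ∃ Cset : Set (PreGraph V A L × V),
      (∀ pv ∈ Cset, IsConstruction Ip pv.1 pv.2) ∧
      TCSatisfies leI ⟨d.rootGraph, d.rootTok, d'.rootGraph, d'.rootTok, Cset⟩ s

/-- `(g', t')` is a structural `L`-transformation of `(g, t)` (with respect to the pattern
decompositions `Δ`, `Δ'` for the universal spaces `Ru`, `Ru'` and the inter-property
identification space `Ip`). -/
def IsStructuralLTransformation (Ru Ru' Ip : CSpace V A L) (Δ Δ' : DTree V A L)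
    (Lm : List ℕ → List ℕ → Option (TConstraint V A L))
    (g : PreGraph V A L) (t : V) (g' : PreGraph V A L) (t' : V) : Prop :=
  (∃ D, IsDecompositionOf Ru D g t ∧ DecompositionMatches Ru.le D Δ) ∧
  (∃ D', IsDecompositionOf Ru' D' g' t' ∧ DecompositionMatches Ru'.le D' Δ') ∧
  ∀ D D', IsDecompositionOf Ru D g t → DecompositionMatches Ru.le D Δ →
    IsDecompositionOf Ru' D' g' t' → DecompositionMatches Ru'.le D' Δ' →
    LSatisfiedBy Ip.le Ip Lm D D'

/-- Partial satisfaction: the constraint is only checked at vertices of the pattern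
decomposition `Δh` whose label is already a construction in `Ru'`. -/
def LPartialSatisfiedBy (leI : Set (L × L)) (Ip Ru' : CSpace V A L)
    (Lm : List ℕ → List ℕ → Option (TConstraint V A L)) (D Δh : DTree V A L) : Prop :=
  ∀ pi pi' s d δh, Lm pi pi' = some s →
    subtreeAt pi D = some d → subtreeAt pi' Δh = some δh →
    IsConstructionIn Ru' δh.rootGraph δh.rootTok →
    ∃ Cset : Set (PreGraph V A L × V),
      (∀ pv ∈ Cset, IsConstruction Ip pv.1 pv.2) ∧
      TCSatisfies leI ⟨d.rootGraph, d.rootTok, δh.rootGraph, δh.rootTok, Cset⟩ s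

/-- The pattern `(ph, vh)` (a construction in the pattern space `Ps'` for `Ru'`) is a partial
`L`-transformation of the construction `(g, t)`. -/
def IsPartialLTransformation (Ru Ru' Ip Ps' : CSpace V A L) (Δ Δ' : DTree V A L)
    (Lm : List ℕ → List ℕ → Option (TConstraint V A L))
    (g : PreGraph V A L) (t : V) (ph : PreGraph V A L) (vh : V) : Prop :=
  (∃ D, IsDecompositionOf Ru D g t ∧ DecompositionMatches Ru.le D Δ) ∧
  (∃ Δh, IsDecompositionOf Ps' Δh ph vh ∧ DecompositionMatches Ru'.le Δh Δ') ∧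
  ∀ D Δh, IsDecompositionOf Ru D g t → DecompositionMatches Ru.le D Δ →
    IsDecompositionOf Ps' Δh ph vh → DecompositionMatches Ru'.le Δh Δ' →
    LPartialSatisfiedBy Ip.le Ip Ru' Lm D Δh

/-! ## Validity, soundness, leaf instantiation -/

/-- Validity of `Lm` for `(g, t)` and `(p, v)` at the pair of vertices `(pi, pi')`. -/
def ValidAt (Ru Ru' Ip Ps' : CSpace V A L) (Δ Δ' : DTree V A L)
    (Lm : List ℕ → List ℕ → Option (TConstraint V A L))
    (g : PreGraph V A L) (t : V) (p : PreGraph V A L) (v : V)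
    (pi pi' : List ℕ) : Prop :=
  ∀ D Δh Dsub Δhsub Δsub Δsub',
    IsDecompositionOf Ru D g t → DecompositionMatches Ru.le D Δ →
    IsDecompositionOf Ps' Δh p v → DecompositionMatches Ru'.le Δh Δ' →
    subtreeAt pi D = some Dsub → subtreeAt pi' Δh = some Δhsub →
    subtreeAt pi Δ = some Δsub → subtreeAt pi' Δ' = some Δsub' →
    IsConstructionIn Ru' Δhsub.ctGraph Δhsub.rootTok →
    IsStructuralLTransformation Ru Ru' Ip Δsub Δsub'
      (fun σ σ' => Lm (pi ++ σ) (pi' ++ σ'))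
      Dsub.ctGraph Dsub.rootTok Δhsub.ctGraph Δhsub.rootTok

/-- Ancestor-validity: validity at every pair of proper descendants-in-the-tree
("ancestors" in the paper's in-tree terminology). -/
def AncestorValidAt (Ru Ru' Ip Ps' : CSpace V A L) (Δ Δ' : DTree V A L)
    (Lm : List ℕ → List ℕ → Option (TConstraint V A L))
    (g : PreGraph V A L) (t : V) (p : PreGraph V A L) (v : V)
    (pi pi' : List ℕ) : Prop :=
  ∀ σ σ' : List ℕ, σ ≠ [] → σ' ≠ [] →
    (∃ d, subtreeAt (pi ++ σ) Δ = some d) → (∃ d', subtreeAt (pi' ++ σ') Δ' = some d') →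
    ValidAt Ru Ru' Ip Ps' Δ Δ' Lm g t p v (pi ++ σ) (pi' ++ σ')

/-- Soundness of a constraint assignment. -/
def SoundAssignment (Ru Ru' Ip Ps' : CSpace V A L) (Δ Δ' : DTree V A L)
    (Lm : List ℕ → List ℕ → Option (TConstraint V A L)) : Prop :=
  ∀ g t, IsConstructionIn Ru g t →
    (∃ D, IsDecompositionOf Ru D g t ∧ DecompositionMatches Ru.le D Δ) →
    ∀ p v, IsConstruction Ps' p v →
      (∃ Δh, IsDecompositionOf Ps' Δh p v ∧ DecompositionMatches Ru'.le Δh Δ') →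
      ∀ pi pi', (∃ d, subtreeAt pi Δ = some d) → (∃ d', subtreeAt pi' Δ' = some d') →
        AncestorValidAt Ru Ru' Ip Ps' Δ Δ' Lm g t p v pi pi' →
        ValidAt Ru Ru' Ip Ps' Δ Δ' Lm g t p v pi pi'

/-- The pattern `(p, v)` leaf-instantiates `Δ'`: it matches `Δ'` and every leaf of its
`Δ'`-canonical decomposition is labelled by a construction in `Ru'`. -/
def LeafInstantiates (Ru' Ps' : CSpace V A L) (Δ' : DTree V A L)
    (p : PreGraph V A L) (v : V) : Prop :=
  (∃ Δh, IsDecompositionOf Ps' Δh p v ∧ DecompositionMatches Ru'.le Δh Δ') ∧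
  ∀ Δh, IsDecompositionOf Ps' Δh p v → DecompositionMatches Ru'.le Δh Δ' →
    ∀ pi δh, subtreeAt pi Δh = some δh → δh.kids = [] →
      IsConstructionIn Ru' δh.rootGraph δh.rootTok

/-- A complete extension of a pattern `(p, v)` that leaf-instantiates `Δ'`. -/
def CompleteExtension (Ru' Ps' : CSpace V A L) (Δ' : DTree V A L)
    (p : PreGraph V A L) (v : V) (g' : PreGraph V A L) (t' : V) : Prop :=
  IsConstructionIn Ru' g' t' ∧
  ∃ fv fa, IsEmbedding Ru'.le g' p fv fa ∧ fv t' = v ∧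
    ∀ Δh, IsDecompositionOf Ps' Δh p v → DecompositionMatches Ru'.le Δh Δ' →
      ∀ pi δh, subtreeAt pi Δh = some δh → δh.kids = [] →
        ∀ x ∈ δh.rootGraph.Tk, x ∈ g'.Tk ∧ fv x = x

/-- `(g, t)` and `(p, v)` are valid at the leaves of `Δ` and `Δ'`. -/
def ValidAtLeaves (Ru Ru' Ip Ps' : CSpace V A L) (Δ Δ' : DTree V A L)
    (Lm : List ℕ → List ℕ → Option (TConstraint V A L))
    (g : PreGraph V A L) (t : V) (p : PreGraph V A L) (v : V) : Prop :=
  ∀ pi pi' δ δ', subtreeAt pi Δ = some δ → subtreeAt pi' Δ' = some δ' →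
    δ.kids = [] → δ'.kids = [] →
    ValidAt Ru Ru' Ip Ps' Δ Δ' Lm g t p v pi pi'

/-!
Induction on the number of configurators. A construction without configurators is trivial.
Otherwise the construct `t` is the output of a configurator `u`, whose neighbourhood is a basic
generator; its complete trail sequence consists of the trails `[aᵢ, a]` entering `t` through `u`.
Because every constructor has an input, the trail extension sequence of such a trail is never
empty, and as soon as it reaches a configurator it uses every arrow at it. Hence the induced
construction `v(TES([aᵢ, a]))` contains the full neighbourhood of each of its configurators and
is again a construction; it misses `u`, whose output arrow `a` is already used. So the induced
constructions have fewer configurators and their decouplings assemble into one of `(g, t)`.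
-/

theorem IsFunctionOn.eq_of_mem {α β : Type*} {R : Set (α × β)} {D : Set α} (h : IsFunctionOn R D)
    {x : α} {y y' : β} (hy : (x, y) ∈ R) (hy' : (x, y') ∈ R) : y = y' :=
  (h.2 x (h.1 _ hy)).unique hy hy'

theorem IsFunctionOn.inter {α β : Type*} {R : Set (α × β)} {D : Set α} (h : IsFunctionOn R D)
    (S : Set α) : IsFunctionOn {q | q ∈ R ∧ q.1 ∈ S} (D ∩ S) :=
  ⟨fun p hp => ⟨h.1 p hp.1, hp.2⟩, fun x hx =>
    (h.2 x hx.1).exists.elim fun y hy => ⟨y, ⟨hy, hx.2⟩, fun _ hy' => h.eq_of_mem hy'.1 hy⟩⟩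

namespace IsGraph

variable {g : PreGraph V A L} {a : A} {v w : V}

theorem src_mem_Cf (hg : IsGraph g) (h : (a, (v, w)) ∈ g.inc) (hw : w ∈ g.Tk) : v ∈ g.Cf :=
  (hg.2.2.1 a v w h).elim (fun h' => absurd h'.2 (hg.1.notMem_of_mem_left hw)) And.left

theorem src_mem_Tk (hg : IsGraph g) (h : (a, (v, w)) ∈ g.inc) (hw : w ∈ g.Cf) : v ∈ g.Tk :=
  (hg.2.2.1 a v w h).elim And.left (fun h' => absurd h'.2 (hg.1.notMem_of_mem_right hw))

theorem tgt_mem_Tk (hg : IsGraph g) (h : (a, (v, w)) ∈ g.inc) (hv : v ∈ g.Cf) : w ∈ g.Tk :=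
  (hg.2.2.1 a v w h).elim (fun h' => absurd h'.1 (hg.1.notMem_of_mem_right hv)) And.right

theorem eq_or_eq_of_mem_incidentArrows (hg : IsGraph g) {u : V} (hb : a ∈ g.incidentArrows u)
    (h : (a, (v, w)) ∈ g.inc) : v = u ∨ w = u := by
  obtain ⟨-, x, hx | hx⟩ := hb
  · exact .inr (Prod.ext_iff.mp (hg.2.1.eq_of_mem h hx)).2
  · exact .inl (Prod.ext_iff.mp (hg.2.1.eq_of_mem h hx)).1

end IsGraph

namespace ChainIn

variable {g : PreGraph V A L}

theorem append {l₁ l₂ : List A} {s m t : V} (h₁ : ChainIn g l₁ s m) (h₂ : ChainIn g l₂ m t) :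
    ChainIn g (l₁ ++ l₂) s t := by
  induction l₁ generalizing s with
  | nil => exact (h₁ : s = m) ▸ h₂
  | cons a l₁ ih =>
    obtain ⟨ha, m', hm', hc⟩ := h₁
    exact ⟨ha, m', hm', ih hc⟩

theorem exists_last {l : List A} {s t : V} (hl : l ≠ []) (h : ChainIn g l s t) :
    ∃ b ∈ l, ∃ w, (b, (w, t)) ∈ g.inc := by
  induction l generalizing s with
  | nil => exact absurd rfl hl
  | cons a l ih =>
    obtain ⟨-, m, hm, hc⟩ := h
    rcases l with _ | ⟨b, l⟩
    · exact ⟨a, by simp, s, (hc : m = t) ▸ hm⟩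
    · obtain ⟨b', hb', w, hw⟩ := ih (List.cons_ne_nil _ _) hc
      exact ⟨b', List.mem_cons_of_mem _ hb', w, hw⟩

theorem mono {g' : PreGraph V A L} (hsub : g.Subgraph g') {l : List A} {s t : V}
    (h : ChainIn g l s t) : ChainIn g' l s t := by
  induction l generalizing s with
  | nil => exact h
  | cons a l ih =>
    obtain ⟨ha, m, hm, hc⟩ := h
    exact ⟨hsub.2.2.1 ha, m, hsub.2.2.2.1 hm, ih hc⟩

theorem restrict {Vs : Set V} {As : Set A} {l : List A} {s t : V} (h : ChainIn g l s t)
    (hl : ∀ b ∈ l, b ∈ As) : ChainIn (g.restrict Vs As) l s t := by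
  induction l generalizing s with
  | nil => exact h
  | cons a l ih =>
    obtain ⟨ha, m, hm, hc⟩ := h
    have haAs := hl a List.mem_cons_self
    exact ⟨⟨ha, haAs⟩, m, ⟨hm, haAs⟩, ih hc fun b hb => hl b (List.mem_cons_of_mem _ hb)⟩

theorem tgt_eq_or_exists_next (hf : IsFunctionOn g.inc g.Arr) {l : List A} {s t : V}
    (h : ChainIn g l s t) {b : A} (hb : b ∈ l) {v w : V} (hvw : (b, (v, w)) ∈ g.inc) :
    w = t ∨ ∃ b' ∈ l, ∃ m, (b', (w, m)) ∈ g.inc := by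
  induction l generalizing s with
  | nil => simp at hb
  | cons a l ih =>
    obtain ⟨-, m, hm, hc⟩ := h
    rcases List.mem_cons.mp hb with rfl | hb
    · obtain rfl : w = m := (Prod.ext_iff.mp (hf.eq_of_mem hvw hm)).2
      rcases l with _ | ⟨c, l⟩
      · exact .inl hc
      · obtain ⟨-, m', hm', -⟩ := hc
        exact .inr ⟨c, by simp, m', hm'⟩
    · obtain h' | ⟨b', hb', m', hm'⟩ := ih hc hb
      · exact .inl h'
      · exact .inr ⟨b', List.mem_cons_of_mem _ hb', m', hm'⟩

theorem exists_suffix (hf : IsFunctionOn g.inc g.Arr) {l : List A} {s t : V}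
    (h : ChainIn g l s t) {b : A} (hb : b ∈ l) {v w : V}
    (hv : (b, (v, w)) ∈ g.inc ∨ (b, (w, v)) ∈ g.inc) :
    ∃ l', l' <:+ l ∧ ChainIn g l' v t := by
  induction l generalizing s with
  | nil => simp at hb
  | cons a l ih =>
    obtain ⟨ha, m, hm, hc⟩ := h
    rcases List.mem_cons.mp hb with rfl | hb
    · rcases hv with hv | hv
      · obtain rfl : v = s := (Prod.ext_iff.mp (hf.eq_of_mem hv hm)).1
        exact ⟨_, List.suffix_refl _, ha, m, hm, hc⟩
      · obtain rfl : v = m := (Prod.ext_iff.mp (hf.eq_of_mem hv hm)).2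
        exact ⟨l, List.suffix_cons _ _, hc⟩
    · obtain ⟨l', hl', hc'⟩ := ih hc hb
      exact ⟨l', hl'.trans (List.suffix_cons _ _), hc'⟩

end ChainIn

namespace PreGraph

variable {g : PreGraph V A L}

theorem restrict_subgraph (g : PreGraph V A L) (Vs : Set V) (As : Set A) :
    (g.restrict Vs As).Subgraph g :=
  ⟨Set.inter_subset_left, Set.inter_subset_left, Set.inter_subset_left,
    fun _ h => h.1, fun _ h => h.1, fun _ h => h.1, fun _ h => h.1⟩

theorem Subgraph.trans {g₁ g₂ g₃ : PreGraph V A L} (h₁ : g₁.Subgraph g₂) (h₂ : g₂.Subgraph g₃) :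
    g₁.Subgraph g₃ :=
  ⟨h₁.1.trans h₂.1, h₁.2.1.trans h₂.2.1, h₁.2.2.1.trans h₂.2.2.1, h₁.2.2.2.1.trans h₂.2.2.2.1,
    h₁.2.2.2.2.1.trans h₂.2.2.2.2.1, h₁.2.2.2.2.2.1.trans h₂.2.2.2.2.2.1,
    h₁.2.2.2.2.2.2.trans h₂.2.2.2.2.2.2⟩

theorem adjTo_subset {Vs : Set V} {As : Set A} {u : V} (hu : u ∈ Vs)
    (hends : ∀ b ∈ As, ∀ v w, (b, (v, w)) ∈ g.inc → v ∈ Vs ∧ w ∈ Vs)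
    (hA : g.incidentArrows u ⊆ As) : g.adjTo u ⊆ Vs := by
  rintro v (rfl | ⟨b, hb, h | h⟩)
  · exact hu
  · exact (hends b (hA ⟨hb, v, .inl h⟩) _ _ h).1
  · exact (hends b (hA ⟨hb, v, .inr h⟩) _ _ h).2

theorem restrict_nh {Vs : Set V} {As : Set A} {u : V} (hA : g.incidentArrows u ⊆ As)
    (hV : g.adjTo u ⊆ Vs) : (g.restrict Vs As).Nh u = g.Nh u := by
  have hI : (g.restrict Vs As).incidentArrows u = g.incidentArrows u := by
    ext b
    simp only [incidentArrows, restrict, Set.mem_ofPred_eq, Set.mem_inter_iff]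
    constructor
    · rintro ⟨⟨hb, -⟩, v, h | h⟩
      exacts [⟨hb, v, .inl h.1⟩, ⟨hb, v, .inr h.1⟩]
    · intro hb
      have hbA := hA hb
      obtain ⟨hb, v, h | h⟩ := hb
      exacts [⟨⟨hb, hbA⟩, v, .inl ⟨h, hbA⟩⟩, ⟨⟨hb, hbA⟩, v, .inr ⟨h, hbA⟩⟩]
  have hJ : (g.restrict Vs As).adjTo u = g.adjTo u := by
    ext v
    simp only [adjTo, Set.mem_union, Set.mem_ofPred_eq]
    refine or_congr_right ⟨?_, ?_⟩
    · rintro ⟨b, ⟨hb, -⟩, h | h⟩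
      exacts [⟨b, hb, .inl h.1⟩, ⟨b, hb, .inr h.1⟩]
    · rintro ⟨b, hb, h | h⟩
      · have hbA := hA ⟨hb, v, .inl h⟩
        exact ⟨b, ⟨hb, hbA⟩, .inl ⟨h, hbA⟩⟩
      · have hbA := hA ⟨hb, v, .inr h⟩
        exact ⟨b, ⟨hb, hbA⟩, .inr ⟨h, hbA⟩⟩
  rw [Nh, Nh, hI, hJ]
  simp only [restrict, mk.injEq]
  refine ⟨?_, ?_, ?_, ?_, ?_, ?_, ?_⟩ <;> ext x <;>
    first
    | exact ⟨fun h => ⟨h.1.1, h.2⟩, fun h => ⟨⟨h.1, hV h.2⟩, h.2⟩⟩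
    | exact ⟨fun h => ⟨h.1.1, h.2⟩, fun h => ⟨⟨h.1, hA h.2⟩, h.2⟩⟩

end PreGraph

section Restriction

variable {g : PreGraph V A L} {Vs : Set V} {As : Set A}

theorem IsGraph.restrict (hg : IsGraph g)
    (hends : ∀ b ∈ As, ∀ v w, (b, (v, w)) ∈ g.inc → v ∈ Vs ∧ w ∈ Vs) :
    IsGraph (g.restrict Vs As) := by
  obtain ⟨hdisj, hinc, hbip, hia, htl, hcl⟩ := hg
  refine ⟨hdisj.mono Set.inter_subset_left Set.inter_subset_left, hinc.inter As, ?_,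
    hia.inter As, htl.inter Vs, hcl.inter Vs⟩
  rintro a v w ⟨h, ha⟩
  obtain ⟨hv, hw⟩ := hends a ha v w h
  exact (hbip a v w h).imp (fun h' => ⟨⟨h'.1, hv⟩, h'.2, hw⟩) (fun h' => ⟨⟨h'.1, hv⟩, h'.2, hw⟩)

theorem IsStructureGraph.restrict {Ty : Set L} {le : Set (L × L)} {C : Set L}
    {sig : Set (L × (List L × L))} (hsg : IsStructureGraph Ty le C sig g)
    (hends : ∀ b ∈ As, ∀ v w, (b, (v, w)) ∈ g.inc → v ∈ Vs ∧ w ∈ Vs)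
    (hfull : ∀ u ∈ g.Cf, u ∈ Vs → g.incidentArrows u ⊆ As) :
    IsStructureGraph Ty le C sig (g.restrict Vs As) := by
  refine ⟨hsg.1.restrict hends, fun x τ h => hsg.2.1 x τ h.1, ?_⟩
  rintro u ⟨hu, huV⟩
  obtain ⟨c, ins, out, hcl, hC, hsig, hconf⟩ := hsg.2.2 u hu
  have hA := hfull u hu huV
  refine ⟨c, ins, out, ⟨hcl, huV⟩, hC, hsig, ?_⟩
  rwa [PreGraph.restrict_nh hA (PreGraph.adjTo_subset huV hends hA)]

theorem IsConstruction.restrict {Cs : CSpace V A L} {t s : V} (hc : IsConstruction Cs g t)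
    (hends : ∀ b ∈ As, ∀ v w, (b, (v, w)) ∈ g.inc → v ∈ Vs ∧ w ∈ Vs)
    (hfull : ∀ u ∈ g.Cf, u ∈ Vs → g.incidentArrows u ⊆ As) (hs : s ∈ (g.restrict Vs As).Tk)
    (htrails : ∀ v ∈ (g.restrict Vs As).Tk ∪ (g.restrict Vs As).Cf,
      ∃ tr : Trail V A, IsTrailIn (g.restrict Vs As) tr ∧ tr.src = v ∧ tr.tgt = s) :
    IsConstruction Cs (g.restrict Vs As) s := by
  obtain ⟨hsub, hsg, hTk, hCf, hArr, huni, -, -⟩ := hc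
  refine ⟨(g.restrict_subgraph Vs As).trans hsub, hsg.restrict hends hfull,
    hTk.subset Set.inter_subset_left, hCf.subset Set.inter_subset_left,
    hArr.subset Set.inter_subset_left, ?_, hs, htrails⟩
  rintro x ⟨hx, -⟩ a ⟨ha, -⟩ b ⟨hb, -⟩ ⟨v, hv, -⟩ ⟨w, hw, -⟩
  exact huni x hx a ha b hb ⟨v, hv⟩ ⟨w, hw⟩

end Restriction

section Configurators

variable {Ty : Set L} {le : Set (L × L)} {C : Set L} {sig : Set (L × (List L × L))}
  {g : PreGraph V A L} {u : V}

theorem InArrowSeq.of_nh {ars : List A} (h : InArrowSeq (g.Nh u) u ars) : InArrowSeq g u ars := by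
  refine ⟨h.1, fun a => (h.2.1 a).trans ?_, fun i a hi => (h.2.2 i a hi).1⟩
  constructor
  · rintro ⟨⟨ha, -⟩, w, hw, -⟩
    exact ⟨ha, w, hw⟩
  · rintro ⟨ha, w, hw⟩
    have hI : a ∈ g.incidentArrows u := ⟨ha, w, .inl hw⟩
    exact ⟨⟨ha, hI⟩, w, hw, hI⟩

theorem IsStructureGraph.out_arrow_unique (hsg : IsStructureGraph Ty le C sig g) (hu : u ∈ g.Cf)
    {a b : A} {v w : V} (ha : (a, (u, v)) ∈ g.inc) (hb : (b, (u, w)) ∈ g.inc) : a = b := by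
  obtain ⟨c, ins, out, -, -, -, hconf⟩ := hsg.2.2 u hu
  have hI : ∀ {x y}, (x, (u, y)) ∈ g.inc → x ∈ (g.Nh u).Arr ∧ ∃ w, (x, (u, w)) ∈ (g.Nh u).inc :=
    fun {x y} h =>
      have hx : x ∈ g.incidentArrows u := ⟨hsg.1.2.1.1 _ h, y, .inr h⟩
      ⟨⟨hx.1, hx⟩, y, h, hx⟩
  exact hconf.2.2.2.2.1.unique (hI ha) (hI hb)

theorem IsStructureGraph.exists_in_arrow (hsg : IsStructureGraph Ty le C sig g)
    (hins : ∀ c ins out, (c, (ins, out)) ∈ sig → ins ≠ []) (hu : u ∈ g.Cf) :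
    ∃ a ∈ g.Arr, ∃ w, (a, (w, u)) ∈ g.inc := by
  obtain ⟨c, ins, out, -, -, hsig, hconf⟩ := hsg.2.2 u hu
  obtain ⟨ars, hars, hlen, -⟩ := hconf.2.2.2.2.2.2
  obtain ⟨a, ha⟩ := List.exists_mem_of_ne_nil ars
    (List.ne_nil_of_length_pos (hlen ▸ List.length_pos_of_ne_nil (hins c ins out hsig)))
  exact ⟨a, (hars.of_nh.2.1 a).mp ha⟩

end Configurators

theorem mem_flatten_zipWith_extend {ars : List A} {Ss : List (List (Trail V A))} {a : A} {s : V}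
    {e' : Trail V A} :
    e' ∈ (List.zipWith (fun (ai : A) (Si : List (Trail V A)) =>
        Si.map fun e => (⟨e.arrows ++ [ai, a], e.src, s⟩ : Trail V A)) ars Ss).flatten ↔
      ∃ (i : ℕ) (ai : A) (Si : List (Trail V A)), ars[i]? = some ai ∧ Ss[i]? = some Si ∧
        ∃ e ∈ Si, e' = ⟨e.arrows ++ [ai, a], e.src, s⟩ := by
  rw [List.mem_flatten]
  simp only [List.mem_iff_getElem? (l := List.zipWith _ _ _), List.getElem?_zipWith]
  constructor
  · rintro ⟨l, ⟨i, hi⟩, he'⟩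
    cases hai : ars[i]? <;> cases hSi : Ss[i]? <;>
      simp only [hai, hSi, reduceCtorEq, Option.some.injEq] at hi
    subst hi
    obtain ⟨e, he, rfl⟩ := List.mem_map.mp he'
    exact ⟨i, _, _, hai, hSi, e, he, rfl⟩
  · rintro ⟨i, ai, Si, hai, hSi, e, he, rfl⟩
    exact ⟨_, ⟨i, by rw [hai, hSi]⟩,
      List.mem_map_of_mem (f := fun e => (⟨e.arrows ++ [ai, a], e.src, s⟩ : Trail V A)) he⟩

theorem exists_getElem?_of_length_eq {α β : Type*} {l : List α} {l' : List β}
    (hlen : l'.length = l.length) {i : ℕ} {x : α} (hx : l[i]? = some x) :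
    ∃ y, l'[i]? = some y :=
  ⟨_, List.getElem?_eq_getElem (hlen ▸ (List.getElem?_eq_some_iff.mp hx).1)⟩

section TES

variable {Ty : Set L} {le : Set (L × L)} {C : Set L} {sig : Set (L × (List L × L))}
  {g : PreGraph V A L}

theorem exists_tes (hsg : IsStructureGraph Ty le C sig g) (hfin : g.Arr.Finite) (tr : Trail V A)
    (hsrc : tr.src ∈ g.Tk) : ∃ S, TES g tr S := by
  induction hn : (g.Arr \ {b | b ∈ tr.arrows}).ncard using Nat.strong_induction_on
    generalizing tr with
  | _ n ih =>
  by_cases hext : Extendable g tr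
  swap
  · exact ⟨_, .nonext tr hext⟩
  obtain ⟨a, ha, haNot, u, hu⟩ := hext
  have huCf : u ∈ g.Cf := hsg.1.src_mem_Cf hu hsrc
  obtain ⟨c, ins, out, -, -, -, hconf⟩ := hsg.2.2 u huCf
  obtain ⟨ars, hars, -⟩ := hconf.2.2.2.2.2.2
  replace hars := hars.of_nh
  have hlt : ∀ ai : A, (g.Arr \ {b | b ∈ ai :: a :: tr.arrows}).ncard < n := fun ai =>
    hn ▸ Set.ncard_lt_ncard
      ⟨Set.sdiff_subset_sdiff_right fun b hb => by simp_all,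
        fun h => (h ⟨ha, haNot⟩).2 (by simp)⟩
      (hfin.subset Set.sdiff_subset)
  have hchoice : ∀ ai ∈ ars, ∃ Si : List (Trail V A), ∀ si, (ai, (si, u)) ∈ g.inc →
      TES g ⟨ai :: a :: tr.arrows, si, tr.tgt⟩ Si := by
    intro ai hai
    obtain ⟨-, si, hsi⟩ := (hars.2.1 ai).mp hai
    obtain ⟨Si, hSi⟩ := ih _ (hlt ai) ⟨ai :: a :: tr.arrows, si, tr.tgt⟩
      (hsg.1.src_mem_Tk hsi huCf) rfl
    refine ⟨Si, fun si' hsi' => ?_⟩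
    obtain rfl : si' = si := (Prod.ext_iff.mp (hsg.1.2.1.eq_of_mem hsi' hsi)).1
    exact hSi
  choose Ss hSs using hchoice
  refine ⟨_, .ext tr a u ars (ars.pmap Ss fun _ h => h) ⟨ha, haNot, u, hu⟩ hu hars
    List.length_pmap fun i ai si Si hai hSi hsi => ?_⟩
  obtain ⟨ai', -, hai', rfl⟩ := Option.pmap_eq_some_iff.mp ((List.getElem?_pmap _ _).symm.trans hSi)
  cases hai.symm.trans hai'
  exact hSs ai _ si hsi

theorem TES.ne_nil (hsg : IsStructureGraph Ty le C sig g)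
    (hins : ∀ c ins out, (c, (ins, out)) ∈ sig → ins ≠ []) {tr : Trail V A}
    {S : List (Trail V A)} (h : TES g tr S) (hsrc : tr.src ∈ g.Tk) : S ≠ [] := by
  induction h with
  | nonext => simp
  | ext tr a u ars Ss _ hinc hars hlen _ ih =>
    have hu := hsg.1.src_mem_Cf hinc hsrc
    obtain ⟨b, hb, w, hw⟩ := hsg.exists_in_arrow hins hu
    obtain ⟨i, hi⟩ := List.mem_iff_getElem?.mp ((hars.2.1 b).mpr ⟨hb, w, hw⟩)
    obtain ⟨Si, hSi⟩ := exists_getElem?_of_length_eq hlen hi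
    obtain ⟨e, he⟩ := List.exists_mem_of_ne_nil _ (ih i b w Si hi hSi hw (hsg.1.src_mem_Tk hw hu))
    exact List.ne_nil_of_mem (mem_flatten_zipWith_extend.mpr ⟨i, b, Si, hi, hSi, e, he, rfl⟩)

theorem TES.exists_mem_arrows {tr : Trail V A} {S : List (Trail V A)} (h : TES g tr S)
    (hext : Extendable g tr) : ∃ a, ExtendableBy g tr a ∧ ∀ e ∈ S, a ∈ e.arrows := by
  cases h with
  | nonext _ hne => exact absurd hext hne
  | ext _ a _ _ _ ha =>
    refine ⟨a, ha, fun e' he' => ?_⟩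
    obtain ⟨-, -, -, -, -, e, -, rfl⟩ := mem_flatten_zipWith_extend.mp he'
    simp

theorem TES.extends_trail (hsg : IsStructureGraph Ty le C sig g) {tr : Trail V A}
    {S : List (Trail V A)} (h : TES g tr S) (htr : IsTrailIn g tr) (hwf : WellFormed g tr) :
    ∀ e ∈ S, e.tgt = tr.src ∧ e.src ∈ g.Tk ∧ (e.arrows ++ tr.arrows).Nodup ∧
      ChainIn g e.arrows e.src e.tgt := by
  induction h with
  | nonext tr => simpa using ⟨hwf.1, htr.1, rfl⟩
  | ext tr a u ars Ss hext hinc hars _ _ ih =>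
    obtain ⟨hnd, hch, -⟩ := htr
    obtain ⟨ha, haNot, -⟩ := hext
    have hu := hsg.1.src_mem_Cf hinc hwf.1
    intro e' he'
    obtain ⟨i, ai, Si, hai, hSi, e, he, rfl⟩ := mem_flatten_zipWith_extend.mp he'
    obtain ⟨hai_arr, si, hsi⟩ := (hars.2.1 ai).mp (List.mem_of_getElem? hai)
    have hsiTk := hsg.1.src_mem_Tk hsi hu
    have hai_ne : ai ≠ a := by
      rintro rfl
      exact hsg.1.1.ne_of_mem hsiTk hu (Prod.ext_iff.mp (hsg.1.2.1.eq_of_mem hsi hinc)).1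
    have hai_tr : ai ∉ tr.arrows := fun hmem => by
      rcases hch.tgt_eq_or_exists_next hsg.1.2.1 hmem hsi with h | ⟨b, hb, m, hm⟩
      · exact hsg.1.1.ne_of_mem hwf.2 hu h.symm
      · exact haNot (hsg.out_arrow_unique hu hinc hm ▸ hb)
    have hchain : ChainIn g [ai, a] si tr.src := ⟨hai_arr, u, hsi, ha, tr.src, hinc, rfl⟩
    obtain ⟨h₁, h₂, h₃, h₄⟩ := ih i ai si Si hai hSi hsi
      ⟨by simp [hai_ne, hai_tr, haNot, hnd], hchain.append hch, .inl hsiTk, .inl hwf.2⟩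
      ⟨hsiTk, hwf.2⟩ e he
    exact ⟨rfl, h₂, by simpa using h₃, h₄.append (h₁ ▸ hchain)⟩

theorem TES.incidentArrows_subset (hsg : IsStructureGraph Ty le C sig g)
    (hins : ∀ c ins out, (c, (ins, out)) ∈ sig → ins ≠ []) {tr : Trail V A}
    {S : List (Trail V A)} (h : TES g tr S) (hsrc : tr.src ∈ g.Tk) :
    ∀ u ∈ g.Cf, (trailArrowSet S ∩ g.incidentArrows u).Nonempty →
      g.incidentArrows u ⊆ trailArrowSet S := by
  induction h with
  | nonext => simp [trailArrowSet]
  | ext tr a u ars Ss _ hinc hars hlen hrec ih =>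
    have hu := hsg.1.src_mem_Cf hinc hsrc
    rintro u' hu' ⟨b₀, ⟨e₀', he₀', hb₀⟩, hb₀u'⟩ b hb
    obtain ⟨i₀, ai₀, Si₀, hai₀, hSi₀, e₀, he₀, rfl⟩ := mem_flatten_zipWith_extend.mp he₀'
    obtain ⟨-, si₀, hsi₀⟩ := (hars.2.1 ai₀).mp (List.mem_of_getElem? hai₀)
    by_cases huu : u' = u
    · subst huu
      obtain ⟨hbArr, w, hw | hw⟩ := hb
      · obtain ⟨i, hi⟩ := List.mem_iff_getElem?.mp ((hars.2.1 b).mpr ⟨hbArr, w, hw⟩)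
        obtain ⟨Si, hSi⟩ := exists_getElem?_of_length_eq hlen hi
        obtain ⟨e, he⟩ := List.exists_mem_of_ne_nil _
          ((hrec i b w Si hi hSi hw).ne_nil hsg hins (hsg.1.src_mem_Tk hw hu))
        exact ⟨_, mem_flatten_zipWith_extend.mpr ⟨i, b, Si, hi, hSi, e, he, rfl⟩, by simp⟩
      · obtain rfl := hsg.out_arrow_unique hu hw hinc
        exact ⟨_, he₀', by simp⟩
    · have hb₀e₀ : b₀ ∈ e₀.arrows := by
        simp only [List.mem_append, List.mem_cons, List.not_mem_nil, or_false] at hb₀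
        rcases hb₀ with hb₀ | rfl | rfl
        · exact hb₀
        · rcases hsg.1.eq_or_eq_of_mem_incidentArrows hb₀u' hsi₀ with h | h
          · exact absurd (hsg.1.src_mem_Tk hsi₀ hu) (h ▸ hsg.1.1.notMem_of_mem_right hu')
          · exact absurd h.symm huu
        · rcases hsg.1.eq_or_eq_of_mem_incidentArrows hb₀u' hinc with h | h
          · exact absurd h.symm huu
          · exact absurd hsrc (h ▸ hsg.1.1.notMem_of_mem_right hu')
      obtain ⟨e, he, hbe⟩ := ih i₀ ai₀ si₀ Si₀ hai₀ hSi₀ hsi₀ (hsg.1.src_mem_Tk hsi₀ hu) u' hu'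
        ⟨b₀, ⟨e₀, he₀, hb₀e₀⟩, hb₀u'⟩ hb
      exact ⟨_, mem_flatten_zipWith_extend.mpr ⟨i₀, ai₀, Si₀, hai₀, hSi₀, e, he, rfl⟩,
        by simp [hbe]⟩

theorem TES.incidentArrows_subset_of_mem_trailVertexSet (hsg : IsStructureGraph Ty le C sig g)
    (hins : ∀ c ins out, (c, (ins, out)) ∈ sig → ins ≠ []) {tr : Trail V A}
    {S : List (Trail V A)} (h : TES g tr S)
    (htr : IsTrailIn g tr) (hwf : WellFormed g tr) {u : V} (hu : u ∈ g.Cf)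
    (huV : u ∈ trailVertexSet g S) : g.incidentArrows u ⊆ trailArrowSet S := by
  rcases huV with ⟨b, hb, w, hw⟩ | ⟨e, he, -, rfl⟩
  · refine h.incidentArrows_subset hsg hins hwf.1 u hu ⟨b, hb, ?_⟩
    exact ⟨hw.elim (hsg.1.2.1.1 _) (hsg.1.2.1.1 _), w, hw.symm⟩
  · exact absurd hu (hsg.1.1.notMem_of_mem_left (h.extends_trail hsg htr hwf e he).2.1)

theorem TES.notMem_trGraph_Cf (hsg : IsStructureGraph Ty le C sig g)
    (hins : ∀ c ins out, (c, (ins, out)) ∈ sig → ins ≠ []) {tr : Trail V A}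
    {S : List (Trail V A)} (h : TES g tr S)
    (htr : IsTrailIn g tr) (hwf : WellFormed g tr) {u : V} (hu : u ∈ g.Cf) {b : A}
    (hb : b ∈ tr.arrows) (hbu : b ∈ g.incidentArrows u) : u ∉ (trGraph g S).Cf := by
  rintro ⟨-, huV⟩
  obtain ⟨e, he, hbe⟩ := h.incidentArrows_subset_of_mem_trailVertexSet hsg hins htr hwf hu huV hbu
  exact List.disjoint_of_nodup_append (h.extends_trail hsg htr hwf e he).2.2.1 hbe hb

end TES

theorem isConstruction_trGraph {Cs : CSpace V A L} {g : PreGraph V A L} {t : V} {tr : Trail V A}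
    {S : List (Trail V A)} (hc : IsConstruction Cs g t)
    (hins : ∀ c ins out, (c, (ins, out)) ∈ Cs.sig → ins ≠ []) (h : TES g tr S)
    (htr : IsTrailIn g tr) (hwf : WellFormed g tr) :
    IsConstruction Cs (trGraph g S) tr.src := by
  have hsg := hc.2.1
  have hS := h.extends_trail hsg htr hwf
  have hsrc : tr.src ∈ (trGraph g S).Tk := by
    refine ⟨hwf.1, ?_⟩
    obtain ⟨e, he⟩ := List.exists_mem_of_ne_nil _ (h.ne_nil hsg hins hwf.1)
    obtain ⟨hetgt, -, -, hech⟩ := hS e he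
    cases harr : e.arrows with
    | nil =>
      rw [harr] at hech
      exact .inr ⟨e, he, harr, hech.trans hetgt⟩
    | cons b l =>
      obtain ⟨b', hb', w, hw⟩ := hech.exists_last (harr ▸ List.cons_ne_nil b l)
      exact .inl ⟨b', ⟨e, he, hb'⟩, w, .inr (hetgt ▸ hw)⟩
  refine hc.restrict (fun b hb v w hvw => ⟨.inl ⟨b, hb, w, .inl hvw⟩, .inl ⟨b, hb, v, .inr hvw⟩⟩)
    (fun u hu huV => h.incidentArrows_subset_of_mem_trailVertexSet hsg hins htr hwf hu huV) hsrc ?_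
  intro v hv
  rcases hv.elim (·.2) (·.2) with ⟨b, ⟨e, he, hbe⟩, w, hw⟩ | ⟨e, he, harr, rfl⟩
  · obtain ⟨hetgt, -, hnd, hech⟩ := hS e he
    obtain ⟨l, hl, hl'⟩ := hech.exists_suffix hsg.1.2.1 hbe hw
    refine ⟨⟨l, v, tr.src⟩, ⟨?_, ?_, hv, .inl hsrc⟩, rfl, rfl⟩
    · exact (hnd.sublist (List.sublist_append_left _ _)).sublist hl.sublist
    · exact hetgt ▸ hl'.restrict fun x hx => ⟨e, he, hl.subset hx⟩
  · obtain ⟨hetgt, -, -, hech⟩ := hS e he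
    rw [harr] at hech
    exact ⟨⟨[], e.src, tr.src⟩, ⟨List.nodup_nil, hech.trans hetgt, hv, .inl hsrc⟩, rfl, rfl⟩

section Generator

variable {Cs : CSpace V A L} {g : PreGraph V A L} {t u : V}

theorem IsGraph.nh_Cf (hg : IsGraph g) (hu : u ∈ g.Cf) : (g.Nh u).Cf = {u} := by
  ext v
  constructor
  · rintro ⟨hv, rfl | ⟨b, -, h | h⟩⟩
    · rfl
    · exact absurd (hg.src_mem_Tk h hu) (hg.1.notMem_of_mem_right hv)
    · exact absurd (hg.tgt_mem_Tk h hu) (hg.1.notMem_of_mem_right hv)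
  · rintro rfl
    exact ⟨hu, .inl rfl⟩

theorem IsGraph.mem_adjTo_of_mem_incidentArrows (hg : IsGraph g) :
    ∀ b ∈ g.incidentArrows u, ∀ v w, (b, (v, w)) ∈ g.inc → v ∈ g.adjTo u ∧ w ∈ g.adjTo u := by
  intro b hb v w h
  rcases hg.eq_or_eq_of_mem_incidentArrows hb h with rfl | rfl
  · exact ⟨.inl rfl, .inr ⟨b, hb.1, .inr h⟩⟩
  · exact ⟨.inr ⟨b, hb.1, .inl h⟩, .inl rfl⟩

theorem IsConstruction.exists_producer (hc : IsConstruction Cs g t) (hne : g.Cf.Nonempty) :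
    ∃ u ∈ g.Cf, ∃ a, (a, (u, t)) ∈ g.inc := by
  obtain ⟨u₀, hu₀⟩ := hne
  have ht := hc.2.2.2.2.2.2.1
  obtain ⟨tr, ⟨-, hch, -⟩, hsrc, htgt⟩ := hc.2.2.2.2.2.2.2 u₀ (.inr hu₀)
  subst hsrc htgt
  have hnil : tr.arrows ≠ [] := fun h => by
    rw [h] at hch
    exact hc.2.1.1.1.ne_of_mem ht hu₀ hch.symm
  obtain ⟨a, -, w, hw⟩ := hch.exists_last hnil
  exact ⟨w, hc.2.1.1.src_mem_Cf hw ht, a, hw⟩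

theorem IsConstruction.nh (hc : IsConstruction Cs g t) (hu : u ∈ g.Cf) {a : A}
    (hat : (a, (u, t)) ∈ g.inc) : IsConstruction Cs (g.Nh u) t := by
  have hg := hc.2.1.1
  have haI : a ∈ g.incidentArrows u := ⟨hg.2.1.1 _ hat, t, .inr hat⟩
  have htN : t ∈ (g.Nh u).Tk := ⟨hc.2.2.2.2.2.2.1, .inr ⟨a, haI.1, .inr hat⟩⟩
  refine hc.restrict hg.mem_adjTo_of_mem_incidentArrows (fun u' hu' hu'V => ?_) htN ?_
  · obtain rfl : u' = u := (hg.nh_Cf hu).subset ⟨hu', hu'V⟩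
    exact subset_rfl
  rintro v (⟨hv, rfl | ⟨b, hb, h | h⟩⟩ | hv)
  · exact absurd hu (hg.1.notMem_of_mem_left hv)
  · have hba : b ≠ a := by
      rintro rfl
      exact hg.1.ne_of_mem hv hu (Prod.ext_iff.mp (hg.2.1.eq_of_mem h hat)).1
    have hbI : b ∈ g.incidentArrows u := ⟨hb, v, .inl h⟩
    have hchain : ChainIn (g.Nh u) [b, a] v t :=
      ChainIn.restrict ⟨hb, u, h, haI.1, t, hat, rfl⟩ (by simp [hbI, haI])
    exact ⟨⟨[b, a], v, t⟩, ⟨by simp [hba], hchain, .inl ⟨hv, .inr ⟨b, hb, .inl h⟩⟩, .inl htN⟩,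
      rfl, rfl⟩
  · obtain rfl := hc.2.1.out_arrow_unique hu h hat
    obtain rfl : v = t := (Prod.ext_iff.mp (hg.2.1.eq_of_mem h hat)).2
    exact ⟨Trail.nil v, ⟨List.nodup_nil, rfl, .inl htN, .inl htN⟩, rfl, rfl⟩
  · obtain rfl : v = u := (hg.nh_Cf hu).subset hv
    exact ⟨⟨[a], v, t⟩, ⟨by simp, ChainIn.restrict ⟨haI.1, t, hat, rfl⟩ (by simp [haI]), .inr hv,
      .inl htN⟩, rfl, rfl⟩

end Generator

theorem IsConstruction.trivialC_of_Cf_eq_empty {Cs : CSpace V A L} {g : PreGraph V A L} {t : V}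
    (hc : IsConstruction Cs g t) (h : g.Cf = ∅) : TrivialC g t := by
  refine Set.eq_singleton_iff_unique_mem.mpr ⟨.inl hc.2.2.2.2.2.2.1, fun v hv => ?_⟩
  obtain ⟨tr, ⟨-, hch, -⟩, rfl, rfl⟩ := hc.2.2.2.2.2.2.2 v hv
  cases harr : tr.arrows with
  | nil => rw [harr] at hch; exact hch
  | cons b l =>
    rw [harr] at hch
    obtain ⟨-, m, hm, -⟩ := hch
    rcases hc.2.1.1.2.2.1 _ _ _ hm with ⟨-, h'⟩ | ⟨h', -⟩ <;> simp [h] at h'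

/-- The generator is the neighbourhood of the configurator producing `t`; each induced
construction misses that configurator. -/
theorem IsConstruction.exists_basic_split {Cs : CSpace V A L} {g : PreGraph V A L} {t : V}
    (hc : IsConstruction Cs g t) (hins : ∀ c ins out, (c, (ins, out)) ∈ Cs.sig → ins ≠ [])
    (hne : g.Cf.Nonempty) :
    ∃ g' ics, IsSplit Cs g t g' ics ∧ BasicC g' ∧
      ∀ p ∈ ics, IsConstruction Cs p.1 p.2 ∧ p.1.Cf.ncard < g.Cf.ncard := by
  obtain ⟨u, hu, a, hat⟩ := hc.exists_producer hne
  have hg := hc.2.1.1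
  have hN := hc.nh hu hat
  have htN : t ∈ (g.Nh u).Tk := hN.2.2.2.2.2.2.1
  obtain ⟨trs, htrs⟩ := exists_tes hN.2.1 hN.2.2.2.2.1 (Trail.nil t) htN
  have htri : ∀ tri ∈ trs,
      IsTrailIn g tri ∧ WellFormed g tri ∧ ∃ b ∈ tri.arrows, b ∈ g.incidentArrows u := by
    have haI : a ∈ g.incidentArrows u := ⟨hg.2.1.1 _ hat, t, .inr hat⟩
    obtain ⟨b, hb, hbtrs⟩ := htrs.exists_mem_arrows ⟨a, ⟨haI.1, haI⟩, List.not_mem_nil, u, hat, haI⟩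
    intro tri h
    obtain ⟨htgt, hsrc, hnd, hch⟩ := htrs.extends_trail hN.2.1
      ⟨List.nodup_nil, rfl, .inl htN, .inl htN⟩ ⟨htN, htN⟩ tri h
    have htgt : tri.tgt ∈ g.Tk := htgt ▸ htN.1
    exact ⟨⟨by simpa [Trail.nil] using hnd, hch.mono (g.restrict_subgraph _ _), .inl hsrc.1,
      .inl htgt⟩, ⟨hsrc.1, htgt⟩, b, hbtrs tri h, hb.1.2⟩
  choose S hS using fun tri (h : tri ∈ trs) => exists_tes hc.2.1 hc.2.2.2.2.1 tri (htri tri h).2.1.1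
  refine ⟨g.Nh u, trs.pmap (fun tri h => (trGraph g (S tri h), tri.src)) fun _ h => h,
    ⟨hN, g.restrict_subgraph _ _, trs, htrs, List.length_pmap, fun i tri hi => ?_⟩,
    ⟨u, hg.nh_Cf hu⟩, fun p hp => ?_⟩
  · exact ⟨_, hS tri (List.mem_of_getElem? hi), by simp [List.getElem?_pmap, hi]⟩
  · obtain ⟨tri, h, rfl⟩ := List.mem_pmap.mp hp
    obtain ⟨htr, hwf, b, hb, hbu⟩ := htri tri h
    refine ⟨isConstruction_trGraph hc hins (hS tri h) htr hwf, Set.ncard_lt_ncard ?_ hc.2.2.2.1⟩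
    exact (Set.ssubset_iff_of_subset Set.inter_subset_left).mpr
      ⟨u, hu, (hS tri h).notMem_trGraph_Cf hc.2.1 hins htr hwf hu hb hbu⟩

/-- every construction has a decoupling decomposition, i.e. a decomposition
each of whose vertex labels is trivial or basic. -/
theorem decoupling_exists {V A L : Type*}
    (Cs : CSpace V A L) (hCs : IsCSpace Cs)
    (g : PreGraph V A L) (t : V) (hc : IsConstruction Cs g t) :
    ∃ D : DTree V A L, IsDecompositionOf Cs D g t ∧
      AllLabels (fun h s => TrivialC h s ∨ BasicC h) D := by
  have hins : ∀ c ins out, (c, (ins, out)) ∈ Cs.sig → ins ≠ [] :=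
    fun c ins out h => (hCs.2.2.2.1 c ins out h).1
  induction hn : g.Cf.ncard using Nat.strong_induction_on generalizing g t with
  | _ n ih =>
  rcases g.Cf.eq_empty_or_nonempty with hCf | hCf
  · exact ⟨.node g t [], .single g t hc,
      .node g t [] (.inl (hc.trivialC_of_Cf_eq_empty hCf)) (by simp)⟩
  obtain ⟨g', ics, hsplit, hbasic, hics⟩ := hc.exists_basic_split hins hCf
  choose D hD using fun p hp => ih _ (hn ▸ (hics p hp).2) p.1 p.2 (hics p hp).1 rfl
  refine ⟨.node g' t (ics.pmap D fun _ h => h),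
    .split g t g' ics _ hc hsplit List.length_pmap fun i ci gi ti hci hgi => ?_,
    .node _ _ _ (.inr hbasic) fun c hc' => ?_⟩
  · obtain ⟨p, -, hp, rfl⟩ := Option.pmap_eq_some_iff.mp ((List.getElem?_pmap _ _).symm.trans hci)
    cases hp.symm.trans hgi
    exact (hD _ _).1
  · obtain ⟨p, hp, rfl⟩ := List.mem_pmap.mp hc'
    exact (hD p hp).2

end RST
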